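/- arXiv:2212.06913 — 4 statements merged into one kernel-verified Lean document; each statement's English description precedes it below -/
import Mathlib

section
/- Let α > 1, t > 0 and x ∈ ℝ, x ≠ 0. Then the symmetric Fresnel pseudo-density satisfies u_{2α}(x,t) = (α t/(π x)) · ∫_0^∞ e^{-t y^α} y^{α-1} sin(x y cos(π/(2α))) cosh(x y sin(π/(2α))) dy; i.e., writing g_α(y; τ) = α (y^{α-1}/τ) exp(−y^α/τ) for the Weibull density with parameters α and τ = 1/t, one has u_{2α}(x,t) = (1/(π x)) E[sin(x cos(π/(2α)) G) cosh(x sin(π/(2α)) G)] where G has density g_α(·; 1/t). -/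
/-!
Since `sin (r cos θ) cosh (r sin θ) = Re sin (r e^{iθ})`, it has the odd power series
`∑ (-1)^n r^(2n+1) cos ((2n+1) θ) / (2n+1)!`. Integrating it term by term against
`e^{-t y^α} y^(α-1)` turns each term into a Weibull moment
`∫₀^∞ e^{-t y^α} y^(α-1+m) dy = Γ(m/α + 1) / (α t^(m/α+1))`, and for `θ = π/(2α)` the resulting
series is `π x / (α t)` times the series defining `u_{2α}`, because
`sin (π (2n+1)(α+1)/(2α)) = (-1)^n cos ((2n+1) θ)`. The interchange is dominated convergence:
the absolute series is bounded by `e^{-t y^α} y^(α-1) sinh (|x| y)`, integrable since `α > 1`.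
-/

open Real MeasureTheory Set

/-- The symmetric Fresnel pseudo-density `u_{2α}(x,t)`, defined by its
(everywhere absolutely convergent) power series. -/
noncomputable def fresnelDensity (α x t : ℝ) : ℝ :=
  (1 / (α * π * t ^ (1 / α))) *
    ∑' k : ℕ, (x / t ^ (1 / α)) ^ (2 * k) *
      (Real.Gamma ((2 * k + 1) / α) / (2 * k).factorial) *
      Real.sin (π * (2 * k + 1) * (α + 1) / (2 * α))

open scoped Nat

lemma hasSum_sin_mul_cosh (θ r : ℝ) :
    HasSum (fun n : ℕ => (-1) ^ n * r ^ (2 * n + 1) * cos ((2 * n + 1) * θ) / (2 * n + 1)!)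
      (sin (r * cos θ) * cosh (r * sin θ)) := by
  set z : ℂ := r * Complex.exp (θ * Complex.I)
  have hterm (n : ℕ) : ((-1) ^ n * z ^ (2 * n + 1) / (2 * n + 1)! : ℂ).re =
      (-1) ^ n * r ^ (2 * n + 1) * cos ((2 * n + 1) * θ) / (2 * n + 1)! := by
    have : (-1) ^ n * z ^ (2 * n + 1) / (2 * n + 1)! =
        (((-1) ^ n * r ^ (2 * n + 1) / (2 * n + 1)! : ℝ) : ℂ) *
          Complex.exp (((2 * n + 1) * θ : ℝ) * Complex.I) := by
      simp only [z, mul_pow, ← Complex.exp_nat_mul]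
      push_cast
      ring_nf
    rw [this, Complex.re_ofReal_mul, Complex.exp_ofReal_mul_I_re]
    ring
  have hsum : (Complex.sin z).re = sin (r * cos θ) * cosh (r * sin θ) := by
    have hz : z = ((r * cos θ : ℝ) : ℂ) + ((r * sin θ : ℝ) : ℂ) * Complex.I := by
      rw [show z = r * Complex.exp (θ * Complex.I) from rfl, Complex.exp_mul_I,
        ← Complex.ofReal_cos, ← Complex.ofReal_sin]
      push_cast
      ring
    rw [hz, Complex.sin_add_mul_I, ← Complex.ofReal_sin, ← Complex.ofReal_cosh,
      ← Complex.ofReal_cos, ← Complex.ofReal_sinh, ← Complex.ofReal_mul, ← Complex.ofReal_mul]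
    simp only [Complex.add_re, Complex.ofReal_re, Complex.mul_I_re, Complex.ofReal_im, neg_zero,
      add_zero]
  simpa only [hterm, hsum] using Complex.hasSum_re (Complex.hasSum_sin z)

lemma sin_add_odd_mul_pi_div_two (θ : ℝ) (n : ℕ) :
    sin (θ + (2 * n + 1) * (π / 2)) = (-1) ^ n * cos θ := by
  rw [show θ + (2 * n + 1) * (π / 2) = θ + π / 2 + n * π by ring, sin_add_nat_mul_pi,
    sin_add_pi_div_two]

lemma integral_exp_neg_mul_rpow_mul_rpow_mul_rpow {α t m : ℝ} (hα : 0 < α) (ht : 0 < t)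
    (hm : -α < m) :
    ∫ y in Ioi 0, exp (-t * y ^ α) * y ^ (α - 1) * y ^ m =
      Gamma (m / α + 1) / (α * t ^ (m / α + 1)) := by
  have hexp : (α - 1 + m + 1) / α = m / α + 1 := by field_simp; ring
  rw [setIntegral_congr_fun measurableSet_Ioi fun y (hy : 0 < y) => by
      rw [mul_assoc, ← rpow_add hy, mul_comm],
    integral_rpow_mul_exp_neg_mul_rpow hα (by linarith) ht, neg_div, hexp, rpow_neg ht.le]
  field_simp

lemma exists_mul_le_mul_rpow_add {α b c : ℝ} (hα : 1 < α) (hb : 0 < b) (hc : 0 ≤ c) :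
    ∃ M, ∀ y, 0 ≤ y → c * y ≤ b * y ^ α + M := by
  set Y := (c / b) ^ (α - 1)⁻¹
  have hY : 0 ≤ Y := by positivity
  refine ⟨c * Y, fun y hy => ?_⟩
  rcases le_or_gt y Y with hyY | hYy
  · nlinarith [rpow_nonneg hy α]
  · have hy0 : 0 < y := hY.trans_lt hYy
    have hcb : c / b ≤ y ^ (α - 1) :=
      calc c / b = Y ^ (α - 1) := by
            rw [← rpow_mul (by positivity), inv_mul_cancel₀ (by linarith), rpow_one]
        _ ≤ y ^ (α - 1) := rpow_le_rpow hY hYy.le (by linarith)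
    have hcy : c * y ≤ b * y ^ α :=
      calc c * y = b * y * (c / b) := by field_simp
        _ ≤ b * y * y ^ (α - 1) := by gcongr
        _ = b * y ^ α := by rw [rpow_sub_one hy0.ne']; field_simp
    nlinarith

lemma integrableOn_exp_neg_mul_rpow_mul_rpow_mul_exp {α t c : ℝ} (hα : 1 < α) (ht : 0 < t)
    (hc : 0 ≤ c) :
    IntegrableOn (fun y => exp (-t * y ^ α) * y ^ (α - 1) * exp (c * y)) (Ioi 0) := by
  obtain ⟨M, hM⟩ := exists_mul_le_mul_rpow_add hα (half_pos ht) hc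
  have hdom : IntegrableOn (fun y => exp M * (y ^ (α - 1) * exp (-(t / 2) * y ^ α))) (Ioi 0) :=
    (integrableOn_rpow_mul_exp_neg_mul_rpow (by linarith) (by linarith) (half_pos ht)).const_mul _
  refine hdom.mono' (by fun_prop) <|
    (ae_restrict_iff' measurableSet_Ioi).2 (ae_of_all _ fun y (hy : 0 < y) => ?_)
  rw [norm_of_nonneg (by positivity)]
  calc exp (-t * y ^ α) * y ^ (α - 1) * exp (c * y) = y ^ (α - 1) * exp (-t * y ^ α + c * y) := by
        rw [exp_add]; ring
    _ ≤ y ^ (α - 1) * exp (M + -(t / 2) * y ^ α) := by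
        gcongr y ^ (α - 1) * exp ?_
        linarith [hM y hy.le]
    _ = exp M * (y ^ (α - 1) * exp (-(t / 2) * y ^ α)) := by rw [exp_add]; ring

lemma hasSum_integral_exp_neg_mul_rpow_mul_sin_mul_cosh {α t : ℝ} (hα : 1 < α) (ht : 0 < t)
    (x θ : ℝ) :
    HasSum (fun n : ℕ => ∫ y in Ioi 0, exp (-t * y ^ α) * y ^ (α - 1) *
        ((-1) ^ n * (x * y) ^ (2 * n + 1) * cos ((2 * n + 1) * θ) / (2 * n + 1)!))
      (∫ y in Ioi 0, exp (-t * y ^ α) * y ^ (α - 1) * sin (x * y * cos θ) *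
        cosh (x * y * sin θ)) := by
  set w : ℝ → ℝ := fun y => exp (-t * y ^ α) * y ^ (α - 1)
  have hw : ∀ y ∈ Ioi (0 : ℝ), 0 ≤ w y := fun y (hy : 0 < y) => by positivity
  refine hasSum_integral_of_dominated_convergence
    (fun n y => w y * (|x * y| ^ (2 * n + 1) / (2 * n + 1)!)) (fun n => by fun_prop)
    (fun n => (ae_restrict_iff' measurableSet_Ioi).2 (ae_of_all _ fun y hy => ?_))
    (ae_of_all _ fun y => ((hasSum_sinh |x * y|).mul_left (w y)).summable) ?_
    (ae_of_all _ fun y => by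
      simpa only [w, mul_assoc] using (hasSum_sin_mul_cosh θ (x * y)).mul_left (w y))
  · rw [norm_mul, norm_of_nonneg (hw y hy)]
    refine mul_le_mul_of_nonneg_left ?_ (hw y hy)
    rw [norm_div, norm_mul, norm_mul, norm_pow, norm_neg, norm_one, one_pow, one_mul,
      Real.norm_natCast, Real.norm_eq_abs, Real.norm_eq_abs, abs_pow]
    gcongr
    exact mul_le_of_le_one_right (by positivity) (abs_cos_le_one _)
  · simp_rw [tsum_mul_left, (hasSum_sinh _).tsum_eq]
    refine (integrableOn_exp_neg_mul_rpow_mul_rpow_mul_exp hα ht (abs_nonneg x)).mono'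
      (by fun_prop) <|
        (ae_restrict_iff' measurableSet_Ioi).2 (ae_of_all _ fun y (hy : 0 < y) => ?_)
    have hsinh : 0 ≤ sinh (|x| * y) := sinh_nonneg_iff.2 (by positivity)
    rw [norm_mul, norm_of_nonneg (hw y hy), abs_mul, abs_of_pos hy, norm_of_nonneg hsinh]
    gcongr
    linarith [sinh_add_cosh (|x| * y), cosh_pos (|x| * y)]

lemma hasSum_moments_sin_mul_cosh {α t : ℝ} (hα : 1 < α) (ht : 0 < t) (x θ : ℝ) :
    HasSum (fun n : ℕ => (-1) ^ n * x ^ (2 * n + 1) * cos ((2 * n + 1) * θ) / (2 * n + 1)! *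
        (Gamma ((2 * n + 1) / α + 1) / (α * t ^ ((2 * n + 1) / α + 1))))
      (∫ y in Ioi 0, exp (-t * y ^ α) * y ^ (α - 1) * sin (x * y * cos θ) *
        cosh (x * y * sin θ)) := by
  convert hasSum_integral_exp_neg_mul_rpow_mul_sin_mul_cosh hα ht x θ using 1
  funext n
  have hm : -α < 2 * n + 1 := by linarith [(Nat.cast_nonneg n : (0 : ℝ) ≤ n)]
  rw [← integral_exp_neg_mul_rpow_mul_rpow_mul_rpow (by linarith) ht hm, ← integral_const_mul]
  refine integral_congr_ae (ae_of_all _ fun y => ?_)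
  have hnat : y ^ (2 * n + 1 : ℝ) = y ^ (2 * n + 1) := by
    exact_mod_cast rpow_natCast y (2 * n + 1)
  dsimp only
  rw [hnat]
  ring

lemma fresnelDensity_summand_eq {α t : ℝ} (hα : 0 < α) (ht : 0 < t) (x : ℝ) (n : ℕ) :
    (-1) ^ n * x ^ (2 * n + 1) * cos ((2 * n + 1) * (π / (2 * α))) / (2 * n + 1)! *
        (Gamma ((2 * n + 1) / α + 1) / (α * t ^ ((2 * n + 1) / α + 1))) =
      π * x / (α * t) * (1 / (α * π * t ^ (1 / α)) * ((x / t ^ (1 / α)) ^ (2 * n) *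
        (Gamma ((2 * n + 1) / α) / (2 * n).factorial) *
          sin (π * (2 * n + 1) * (α + 1) / (2 * α)))) := by
  have hphase : π * (2 * n + 1) * (α + 1) / (2 * α) =
      (2 * n + 1) * (π / (2 * α)) + (2 * n + 1) * (π / 2) := by
    field_simp
    ring
  have hpow : t ^ ((2 * n + 1) / α) = t ^ (1 / α) * (t ^ (1 / α)) ^ (2 * n) := by
    rw [← pow_succ', ← rpow_natCast, ← rpow_mul ht.le]
    push_cast
    ring_nf
  rw [hphase, sin_add_odd_mul_pi_div_two, Gamma_add_one (by positivity), rpow_add ht, rpow_one,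
    hpow, Nat.factorial_succ, div_pow]
  push_cast
  field_simp
  ring

/-- For `α > 1`, `t > 0` and `x ≠ 0`, the symmetric Fresnel
pseudo-density admits the Weibull probabilistic representation
`u_{2α}(x,t) = (α t/(π x)) ∫_0^∞ e^{-t y^α} y^{α-1}
  sin(x y cos(π/(2α))) cosh(x y sin(π/(2α))) dy`. -/
theorem fresnelDensity_weibull_repr (α t x : ℝ) (hα : 1 < α) (ht : 0 < t)
    (hx : x ≠ 0) :
    fresnelDensity α x t =
      (α * t / (π * x)) *
        ∫ y in Ioi (0 : ℝ), Real.exp (-t * y ^ α) * y ^ (α - 1) *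
          Real.sin (x * y * Real.cos (π / (2 * α))) *
          Real.cosh (x * y * Real.sin (π / (2 * α))) := by
  have hα0 : 0 < α := by linarith
  have hI : ∫ y in Ioi (0 : ℝ), exp (-t * y ^ α) * y ^ (α - 1) *
      sin (x * y * cos (π / (2 * α))) * cosh (x * y * sin (π / (2 * α))) =
        π * x / (α * t) * fresnelDensity α x t := by
    rw [← (hasSum_moments_sin_mul_cosh hα ht x (π / (2 * α))).tsum_eq, fresnelDensity,
      ← tsum_mul_left, ← tsum_mul_left]
    exact tsum_congr (fresnelDensity_summand_eq hα0 ht x)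
  rw [hI]
  field_simp
end

section
/- For t > 0 and all x ∈ ℝ, the symmetric Fresnel pseudo-density of order α = 2 satisfies u_4(x,t) = (1/(2√(π t))) · cos(x²/(4t) − π/4). -/
/-!
Since `Γ(k + 1/2) / (2k)! = √π / (4^k k!)`, for `α = 2` the series collapses to
`√π ∑ zᵏ/k! · sin(3π/4 + 3πk/2)` with `z = x²/(4t)`. This is the imaginary part of
`√π e^{3πi/4} exp(z e^{3πi/2}) = √π e^{i(3π/4 - z)}`, and `sin(3π/4 - z) = cos(z - π/4)`.
-/

open Real

open scoped Nat

theorem Real.Gamma_nat_add_half_div_factorial (k : ℕ) :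
    Gamma (k + 1 / 2) / (2 * k)! = √π / (4 ^ k * k !) := by
  rw [Gamma_nat_add_half]
  cases k with
  | zero => simp
  | succ k =>
    rw [show 2 * (k + 1) = (2 * k + 1) + 1 by ring, Nat.factorial_eq_mul_doubleFactorial,
      show 2 * k + 1 + 1 = 2 * (k + 1) by ring, Nat.doubleFactorial_two_mul,
      show 2 * (k + 1) - 1 = 2 * k + 1 by omega, show (4 : ℝ) = 2 ^ 2 by norm_num, ← pow_mul]
    have : ((2 * k + 1)‼ : ℝ) ≠ 0 := by positivity
    push_cast
    field_simp
    ring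

theorem Real.hasSum_pow_div_factorial_mul_sin (z a θ : ℝ) :
    HasSum (fun k : ℕ => z ^ k / k ! * sin (a + k * θ))
      (exp (z * cos θ) * sin (a + z * sin θ)) := by
  have h := ((NormedSpace.expSeries_div_hasSum_exp ((z : ℂ) * Complex.exp (θ * Complex.I))).mul_left
    (Complex.exp (a * Complex.I))).mapL Complex.imCLM
  rw [← Complex.exp_eq_exp_ℂ, ← Complex.exp_add] at h
  convert h using 1
  · ext k
    have hterm : Complex.exp (a * Complex.I) * (((z : ℂ) * Complex.exp (θ * Complex.I)) ^ k / k !)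
        = ((z ^ k / k ! : ℝ) : ℂ) * Complex.exp ((a + k * θ : ℝ) * Complex.I) := by
      push_cast
      rw [mul_pow, ← Complex.exp_nat_mul, add_mul, Complex.exp_add]
      ring_nf
    simp only [Complex.imCLM_apply, hterm, Complex.im_ofReal_mul, Complex.exp_ofReal_mul_I_im]
  · simp [Complex.exp_im, Complex.exp_re]

theorem fresnelDensity_two_summand (t x : ℝ) (ht : 0 < t) (k : ℕ) :
    (x / t ^ (1 / (2 : ℝ))) ^ (2 * k) * (Gamma ((2 * k + 1) / 2) / (2 * k)!) *
        sin (π * (2 * k + 1) * (2 + 1) / (2 * 2)) =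
      √π * ((x ^ 2 / (4 * t)) ^ k / k ! * sin (3 * π / 4 + k * (3 * π / 2))) := by
  have hpow : (x / t ^ (1 / (2 : ℝ))) ^ (2 * k) = 4 ^ k * (x ^ 2 / (4 * t)) ^ k := by
    rw [← sqrt_eq_rpow, pow_mul, div_pow, sq_sqrt ht.le, ← mul_pow]
    congr 1
    field_simp
  rw [hpow, show ((2 : ℝ) * k + 1) / 2 = k + 1 / 2 by ring, Gamma_nat_add_half_div_factorial,
    show π * (2 * k + 1) * (2 + 1) / (2 * 2) = 3 * π / 4 + k * (3 * π / 2) by ring]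
  have : (4 : ℝ) ^ k ≠ 0 := by positivity
  field_simp

/-- For `t > 0` and all `x ∈ ℝ`, the symmetric Fresnel
pseudo-density of order `α = 2` satisfies
`u_4(x,t) = (1/(2√(π t))) · cos(x²/(4t) − π/4)`. -/
theorem fresnelDensity_two (t x : ℝ) (ht : 0 < t) :
    fresnelDensity 2 x t =
      (1 / (2 * Real.sqrt (π * t))) * Real.cos (x ^ 2 / (4 * t) - π / 4) := by
  set z := x ^ 2 / (4 * t)
  have hcos : cos (3 * π / 2) = 0 := by
    rw [show 3 * π / 2 = π / 2 + π by ring, cos_add_pi, cos_pi_div_two, neg_zero]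
  have hsin : sin (3 * π / 2) = -1 := by
    rw [show 3 * π / 2 = π / 2 + π by ring, sin_add_pi, sin_pi_div_two]
  have hseries : HasSum (fun k : ℕ => (x / t ^ (1 / (2 : ℝ))) ^ (2 * k) *
      (Gamma ((2 * k + 1) / 2) / (2 * k)!) * sin (π * (2 * k + 1) * (2 + 1) / (2 * 2)))
      (√π * cos (z - π / 4)) := by
    have h := (hasSum_pow_div_factorial_mul_sin z (3 * π / 4) (3 * π / 2)).mul_left √π
    rw [hcos, hsin, mul_zero, exp_zero, one_mul,
      show 3 * π / 4 + z * -1 = π / 2 - (z - π / 4) by ring, sin_pi_div_two_sub] at h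
    simpa only [fresnelDensity_two_summand t x ht] using h
  rw [fresnelDensity, hseries.tsum_eq, ← sqrt_eq_rpow, sqrt_mul pi_pos.le]
  have hπ : √π * √π = π := mul_self_sqrt pi_pos.le
  have : √t ≠ 0 := by positivity
  generalize cos (z - π / 4) = c
  field_simp
  linear_combination c * hπ
end

section
/- For all t > 0 and all real x ≠ 0, one has (1/(π x)) · ∫_0^∞ sin(x √(y/(2t))) · cosh(x √(y/(2t))) · e^{-y} dy = (1/(2√(π t))) · cos(x²/(4t) − π/4). -/
open Real MeasureTheory Set

/-!
Substituting `y = u ^ 2` turns the integral into `2 ∫₀^∞ u sin (cu) cosh (cu) e^{-u²} du` with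
`c = x / √(2t)`. The integrand is even, and on the whole line `sin (cu) cosh (cu)` may be replaced
by `Im e^{(1+i)cu}`, so everything reduces to the Gaussian moment
`∫ u e^{-u² + ku} du = (√π k / 2) e^{k²/4}` at `k = (1+i)c`, where `e^{k²/4} = e^{ic²/2}`.
-/

section GaussianMoment

open Complex

variable {b : ℂ}

theorem integrable_mul_cexp_quadratic (hb : b.re < 0) (c : ℂ) :
    Integrable fun x : ℝ => (x : ℂ) * cexp (b * x ^ 2 + c * x) := by
  have h (s : ℝ) : Integrable fun x : ℝ => ‖cexp (b * x ^ 2 + (c + s) * x)‖ := by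
    simpa using (integrable_cexp_quadratic' hb (c + s) 0).norm
  refine ((h 1).add (h (-1))).mono' (by fun_prop) (.of_forall fun x => ?_)
  -- `|x| ≤ eˣ + e⁻ˣ` trades the factor `x` for a shift of the linear coefficient by `±1`
  have hshift (s : ℝ) :
      ‖cexp (b * x ^ 2 + (c + s) * x)‖ = ‖cexp (b * x ^ 2 + c * x)‖ * Real.exp (s * x) := by
    rw [show b * x ^ 2 + (c + s) * x = b * x ^ 2 + c * x + ((s * x : ℝ) : ℂ) by push_cast; ring,
      Complex.exp_add, norm_mul, norm_exp_ofReal]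
  have habs : |x| ≤ Real.exp x + Real.exp (-x) := by
    rcases abs_cases x with ⟨hx, -⟩ | ⟨hx, -⟩ <;> rw [hx] <;>
      linarith [Real.add_one_le_exp x, Real.add_one_le_exp (-x), Real.exp_pos x, Real.exp_pos (-x)]
  rw [Pi.add_apply, hshift, hshift, norm_mul, norm_real, Real.norm_eq_abs, one_mul, neg_one_mul,
    ← mul_add, mul_comm]
  exact mul_le_mul_of_nonneg_left habs (norm_nonneg _)

/-- The derivative `(2bx + c) e^{bx² + cx}` of the Gaussian has integral zero. -/
theorem integral_mul_cexp_quadratic (hb : b.re < 0) (c : ℂ) :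
    ∫ x : ℝ, (x : ℂ) * cexp (b * x ^ 2 + c * x) =
      -c / (2 * b) * ∫ x : ℝ, cexp (b * x ^ 2 + c * x) := by
  have hb0 : b ≠ 0 := by rintro rfl; simp at hb
  have hint : Integrable fun x : ℝ => cexp (b * x ^ 2 + c * x) := by
    simpa using integrable_cexp_quadratic' hb c 0
  have hint' := integrable_mul_cexp_quadratic hb c
  have hderiv (x : ℝ) : HasDerivAt (fun x : ℝ => cexp (b * x ^ 2 + c * x))
      (2 * b * (x * cexp (b * x ^ 2 + c * x)) + c * cexp (b * x ^ 2 + c * x)) x := by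
    have := (((hasDerivAt_pow 2 (x : ℂ)).const_mul b).fun_add
      (hasDerivAt_const_mul c)).cexp.comp_ofReal
    convert this using 1
    push_cast
    ring
  have hzero := integral_eq_zero_of_hasDerivAt_of_integrable hderiv
    ((hint'.const_mul _).add (hint.const_mul _)) hint
  rw [integral_add (hint'.const_mul _) (hint.const_mul _), integral_const_mul,
    integral_const_mul] at hzero
  rw [div_mul_eq_mul_div, eq_div_iff (mul_ne_zero two_ne_zero hb0)]
  linear_combination hzero

theorem integral_mul_cexp_neg_sq_add (k : ℂ) :
    ∫ x : ℝ, (x : ℂ) * cexp (-x ^ 2 + k * x) = √π * k / 2 * cexp (k ^ 2 / 4) := by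
  have h := integral_mul_cexp_quadratic (b := -1) (by simp) k
  have h0 := integral_cexp_quadratic (b := -1) (by simp) k 0
  simp only [neg_one_mul, add_zero, neg_neg, div_one, zero_sub] at h h0
  rw [h, h0, show (1 / 2 : ℂ) = ((1 / 2 : ℝ) : ℂ) by norm_num, ← ofReal_cpow pi_pos.le,
    ← Real.sqrt_eq_rpow]
  ring_nf

end GaussianMoment

theorem integral_mul_sin_mul_cosh_mul_exp_neg_sq (c : ℝ) :
    ∫ u : ℝ, u * sin (c * u) * cosh (c * u) * exp (-u ^ 2) =
      √π * c / 2 * (cos (c ^ 2 / 2) + sin (c ^ 2 / 2)) := by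
  set h : ℝ → ℂ := fun u => u * Complex.exp (-u ^ 2 + ((1 + Complex.I) * c) * u) with h_def
  have hint : Integrable h := by
    simpa [neg_one_mul] using
      integrable_mul_cexp_quadratic (b := -1) (by simp) ((1 + Complex.I) * c)
  have heven_part (u : ℝ) :
      u * sin (c * u) * cosh (c * u) * exp (-u ^ 2) = ((h u + h (-u)) / 2).im := by
    simp only [cosh_eq, h_def, ← Complex.ofReal_pow, Complex.ofReal_neg, even_two, Even.neg_pow,
      mul_neg, neg_mul, Complex.div_ofNat_im, Complex.add_im, Complex.mul_im, Complex.ofReal_re,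
      Complex.exp_im, Complex.add_re, Complex.neg_re, Complex.mul_re, Complex.one_re, Complex.I_re,
      add_zero, one_mul, Complex.one_im, Complex.I_im, zero_add, Complex.ofReal_im, mul_zero,
      sub_zero, exp_add, Complex.neg_im, neg_zero, zero_mul, sin_neg, neg_neg]
    ring
  calc ∫ u : ℝ, u * sin (c * u) * cosh (c * u) * exp (-u ^ 2)
      = (∫ u : ℝ, (h u + h (-u)) / 2).im := by
        simp_rw [heven_part]; exact integral_im ((hint.add hint.comp_neg).div_const 2)
    _ = (∫ u : ℝ, h u).im := by
        rw [integral_div, integral_add hint hint.comp_neg, integral_neg_eq_self, add_self_div_two]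
    _ = √π * c / 2 * (cos (c ^ 2 / 2) + sin (c ^ 2 / 2)) := by
        rw [h_def, integral_mul_cexp_neg_sq_add,
          show ((1 + Complex.I) * c) ^ 2 / 4 = ((c ^ 2 / 2 : ℝ) : ℂ) * Complex.I by
            push_cast; linear_combination (c : ℂ) ^ 2 / 4 * Complex.I_sq,
          Complex.mul_im, Complex.exp_ofReal_mul_I_re, Complex.exp_ofReal_mul_I_im]
        simp only [Complex.div_ofNat_re, Complex.mul_re, Complex.ofReal_re, Complex.add_re,
          Complex.one_re, Complex.I_re, add_zero, one_mul, Complex.add_im, Complex.one_im,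
          Complex.I_im, zero_add, Complex.ofReal_im, mul_zero, sub_zero, Complex.mul_im, zero_mul,
          Complex.div_ofNat_im]
        ring

theorem integral_Ioi_mul_sin_mul_cosh_mul_exp_neg_sq (c : ℝ) :
    ∫ u in Ioi 0, u * sin (c * u) * cosh (c * u) * exp (-u ^ 2) =
      √π * c / 4 * (cos (c ^ 2 / 2) + sin (c ^ 2 / 2)) := by
  have heven (u : ℝ) : |u| * sin (c * |u|) * cosh (c * |u|) * exp (-|u| ^ 2) =
      u * sin (c * u) * cosh (c * u) * exp (-u ^ 2) := by
    rcases abs_cases u with ⟨h, -⟩ | ⟨h, -⟩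
    · rw [h]
    · rw [h, mul_neg, sin_neg, cosh_neg, neg_sq]; ring
  have h := integral_comp_abs (f := fun u => u * sin (c * u) * cosh (c * u) * exp (-u ^ 2))
  simp only [heven, integral_mul_sin_mul_cosh_mul_exp_neg_sq] at h
  linarith

theorem integral_comp_sq_Ioi {E : Type*} [NormedAddCommGroup E] [NormedSpace ℝ E] (g : ℝ → E) :
    ∫ x in Ioi 0, (2 * x) • g (x ^ 2) = ∫ y in Ioi 0, g y := by
  rw [← integral_comp_rpow_Ioi_of_pos (g := g) two_pos]
  refine setIntegral_congr_fun measurableSet_Ioi fun x _ => ?_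
  norm_num

/-- For all `t > 0` and all real `x ≠ 0`,
`(1/(π x)) ∫_0^∞ sin(x √(y/(2t))) cosh(x √(y/(2t))) e^{-y} dy
  = (1/(2√(π t))) cos(x²/(4t) − π/4)`. -/
theorem exp_weibull_integral_identity (t x : ℝ) (ht : 0 < t) (hx : x ≠ 0) :
    (1 / (π * x)) *
      ∫ y in Ioi (0 : ℝ), Real.sin (x * Real.sqrt (y / (2 * t))) *
        Real.cosh (x * Real.sqrt (y / (2 * t))) * Real.exp (-y) =
      (1 / (2 * Real.sqrt (π * t))) * Real.cos (x ^ 2 / (4 * t) - π / 4) := by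
  set c := x / √(2 * t)
  have hθ : c ^ 2 / 2 = x ^ 2 / (4 * t) := by
    rw [div_pow, sq_sqrt (by positivity)]; field_simp; ring
  have hsubst : ∀ u ∈ Ioi (0 : ℝ), (2 * u) • (sin (x * √(u ^ 2 / (2 * t))) *
      cosh (x * √(u ^ 2 / (2 * t))) * exp (-u ^ 2)) =
        2 * (u * sin (c * u) * cosh (c * u) * exp (-u ^ 2)) := fun u hu => by
    rw [sqrt_div (sq_nonneg u), sqrt_sq (le_of_lt hu), smul_eq_mul, mul_div, mul_div_right_comm]
    ring
  rw [← integral_comp_sq_Ioi, setIntegral_congr_fun measurableSet_Ioi hsubst, integral_const_mul,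
    integral_Ioi_mul_sin_mul_cosh_mul_exp_neg_sq, hθ, cos_sub, cos_pi_div_four, sin_pi_div_four,
    sqrt_mul' _ ht.le, show c = x / (√2 * √t) by rw [← sqrt_mul' _ ht.le]]
  have hsqrt_t : 0 < √t := sqrt_pos.2 ht
  field_simp
  rw [sq_sqrt pi_pos.le, sq_sqrt zero_le_two]
  ring
end

section
/- Let α > 1, 0 < θ < 1 with αθ > 1, let t > 0 and x ∈ ℝ, x ≠ 0. Then (1/(α θ π t^{1/(αθ)})) ∑_{k=0}^∞ (x/t^{1/(αθ)})^{2k} · (Γ((2k+1)/(αθ))/(2k)!) · sin(π(2k+1)(α+1)/(2α)) = (α θ t/(π x)) · ∫_0^∞ e^{-t y^{αθ}} y^{αθ−1} sin(x y cos(π/(2α))) cosh(x y sin(π/(2α))) dy; i.e., the subordinated pseudo-density equals (1/(π x)) E[sin(x cos(π/(2α)) G) cosh(x sin(π/(2α)) G)] where G has Weibull density g_{αθ}(y; 1/t) = αθ t y^{αθ−1} exp(−t y^{αθ}). -/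
/-!
Write `φ = π / (2α)` and `β = αθ`. Since `sin (u cos φ) cosh (u sin φ) = Re (sin (u e^{iφ}))`,
the sine series gives `∑ (-1)^k u^{2k+1} cos ((2k+1)φ) / (2k+1)!`. Integrate it term by term
against the Weibull weight `exp (-t y^β) y^{β-1}`, whose `n`-th moment is
`t^{-(1 + n/β)} Γ(n/β + 1) / β`. The swap of sum and integral is justified because log-convexity
of `Γ` gives `Γ(n/β + 1) ≤ (n!)^{1/β}`, so the absolute series is dominated by
`∑ z^n / (n!)^{1 - 1/β}`, which converges since `β > 1`. Finally
`sin (π(2k+1)(α+1)/(2α)) = (-1)^k cos ((2k+1)φ)` matches the result with the given series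
term by term.
-/

open Real MeasureTheory Set Filter Topology

theorem hasSum_sin_mul_cos_mul_cosh_mul_sin (u φ : ℝ) :
    HasSum (fun k : ℕ => (-1) ^ k * u ^ (2 * k + 1) * cos ((2 * k + 1) * φ) /
      (2 * k + 1).factorial) (sin (u * cos φ) * cosh (u * sin φ)) := by
  have hsin := (Complex.hasSum_sin (u * Complex.exp (φ * Complex.I))).mapL Complex.reCLM
  have hterm (k : ℕ) : (-1) ^ k * ((u : ℂ) * Complex.exp (φ * Complex.I)) ^ (2 * k + 1) /
      (2 * k + 1).factorial = (((-1) ^ k * u ^ (2 * k + 1) / (2 * k + 1).factorial : ℝ) : ℂ) *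
        Complex.exp (((2 * k + 1) * φ : ℝ) * Complex.I) := by
    rw [mul_pow, ← Complex.exp_nat_mul]
    push_cast
    rw [mul_assoc _ (φ : ℂ)]
    ring
  convert hsin using 2 with k
  · simp only [Complex.reCLM_apply, hterm, Complex.re_ofReal_mul, Complex.exp_ofReal_mul_I_re]
    ring
  · have hre : ((u : ℂ) * Complex.exp (φ * Complex.I)).re = u * cos φ := by
      simp [Complex.exp_ofReal_mul_I_re]
    have him : ((u : ℂ) * Complex.exp (φ * Complex.I)).im = u * sin φ := by
      simp [Complex.exp_ofReal_mul_I_im]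
    rw [Complex.reCLM_apply, Complex.sin_eq, hre, him, ← Complex.ofReal_sin,
      ← Complex.ofReal_cosh, ← Complex.ofReal_cos, ← Complex.ofReal_sinh]
    simp only [Complex.add_re, Complex.mul_re, Complex.ofReal_re, Complex.ofReal_im,
      Complex.I_re, Complex.I_im, Complex.mul_im]
    ring

theorem sin_pi_mul_odd_mul_add_one_div {α : ℝ} (hα : α ≠ 0) (k : ℕ) :
    sin (π * (2 * k + 1) * (α + 1) / (2 * α)) = (-1) ^ k * cos ((2 * k + 1) * (π / (2 * α))) := by
  have harg : π * (2 * k + 1) * (α + 1) / (2 * α) =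
      (2 * k + 1) * (π / (2 * α)) + π / 2 + (k : ℤ) * π := by
    push_cast
    field_simp
    ring
  rw [harg, sin_add_int_mul_pi, sin_add_pi_div_two, zpow_natCast]

theorem Gamma_div_add_one_le_factorial_rpow {β : ℝ} (hβ : 1 < β) (m : ℕ) :
    Gamma (m / β + 1) ≤ (m.factorial : ℝ) ^ (1 / β) := by
  have hβ0 : 0 < β := by linarith
  have hconv := Gamma_mul_add_mul_le_rpow_Gamma_mul_rpow_Gamma one_pos
    (by positivity : (0 : ℝ) < m + 1) (by rw [sub_pos, div_lt_one hβ0]; exact hβ)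
    (by positivity : 0 < 1 / β) (sub_add_cancel 1 (1 / β))
  rwa [Gamma_one, one_rpow, one_mul, Gamma_nat_eq_factorial,
    show (1 - 1 / β) * 1 + 1 / β * (m + 1) = m / β + 1 by field_simp; ring] at hconv

theorem summable_pow_div_factorial_rpow (z : ℝ) {γ : ℝ} (hγ : 0 < γ) :
    Summable (fun n : ℕ => z ^ n / (n.factorial : ℝ) ^ γ) := by
  have hratio : Tendsto (fun n : ℕ => |z| / ((n : ℝ) + 1) ^ γ) atTop (𝓝 0) :=
    tendsto_const_nhds.div_atTop <| (tendsto_rpow_atTop hγ).comp <|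
      tendsto_atTop_add_const_right _ 1 tendsto_natCast_atTop_atTop
  refine summable_of_ratio_norm_eventually_le (r := 1 / 2) (by norm_num) ?_
  filter_upwards [hratio.eventually_le_const (by norm_num : (0 : ℝ) < 1 / 2)] with n hn
  have hfact : ((n + 1).factorial : ℝ) ^ γ = ((n : ℝ) + 1) ^ γ * (n.factorial : ℝ) ^ γ := by
    rw [Nat.factorial_succ, Nat.cast_mul, mul_rpow (by positivity) (by positivity)]
    push_cast
    ring
  calc ‖z ^ (n + 1) / ((n + 1).factorial : ℝ) ^ γ‖
      = |z| / ((n : ℝ) + 1) ^ γ * ‖z ^ n / (n.factorial : ℝ) ^ γ‖ := by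
        rw [hfact, norm_div, norm_div, norm_pow, norm_pow, Real.norm_eq_abs,
          Real.norm_of_nonneg (by positivity), Real.norm_of_nonneg (by positivity)]
        field_simp
        ring
    _ ≤ 1 / 2 * ‖z ^ n / (n.factorial : ℝ) ^ γ‖ := by gcongr

section WeibullMoments

variable {β t : ℝ}

theorem weibullWeight_mul_pow_eqOn (n : ℕ) :
    EqOn (fun y : ℝ => exp (-t * y ^ β) * y ^ (β - 1) * y ^ n)
      (fun y => y ^ (β - 1 + n) * exp (-t * y ^ β)) (Ioi 0) := by
  intro y hy
  simp only
  rw [rpow_add hy, rpow_natCast]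
  ring

theorem integrableOn_weibullWeight_mul_pow (hβ : 0 < β) (ht : 0 < t) (n : ℕ) :
    IntegrableOn (fun y : ℝ => exp (-t * y ^ β) * y ^ (β - 1) * y ^ n) (Ioi 0) :=
  (integrableOn_rpow_mul_exp_neg_mul_rpow (by linarith [Nat.cast_nonneg (α := ℝ) n]) hβ
    ht).congr_fun (weibullWeight_mul_pow_eqOn n).symm measurableSet_Ioi

theorem integral_weibullWeight_mul_pow (hβ : 0 < β) (ht : 0 < t) (n : ℕ) :
    ∫ y in Ioi 0, exp (-t * y ^ β) * y ^ (β - 1) * y ^ n =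
      t ^ (-(1 + n / β)) / β * Gamma (n / β + 1) := by
  rw [setIntegral_congr_fun measurableSet_Ioi (weibullWeight_mul_pow_eqOn n),
    integral_rpow_mul_exp_neg_mul_rpow hβ (by linarith [Nat.cast_nonneg (α := ℝ) n]) ht]
  have harg : (β - 1 + n + 1) / β = n / β + 1 := by field_simp; ring
  rw [neg_div, harg, add_comm (n / β) 1]
  ring

theorem summable_pow_div_factorial_mul_weibullMoment (hβ : 1 < β) (ht : 0 < t) (z : ℝ) :
    Summable (fun n : ℕ =>
      |z| ^ n / n.factorial * (t ^ (-(1 + n / β)) / β * Gamma (n / β + 1))) := by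
  have hβ0 : 0 < β := by linarith
  have hmajorant := ((summable_pow_div_factorial_rpow (|z| * t ^ (-1 / β))
    (by rw [sub_pos, div_lt_one hβ0]; exact hβ : 0 < 1 - 1 / β)).mul_left (t⁻¹ / β))
  refine hmajorant.of_nonneg_of_le (fun n => by positivity) (fun n => ?_)
  have hfact : 0 < (n.factorial : ℝ) := by positivity
  have ht_pow : t ^ (-(1 + n / β)) = t⁻¹ * (t ^ (-1 / β)) ^ n := by
    rw [← rpow_natCast, ← rpow_mul ht.le, ← rpow_neg_one, ← rpow_add ht]
    congr 1
    ring
  calc |z| ^ n / n.factorial * (t ^ (-(1 + n / β)) / β * Gamma (n / β + 1))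
      ≤ |z| ^ n / n.factorial * (t ^ (-(1 + n / β)) / β * (n.factorial : ℝ) ^ (1 / β)) := by
        gcongr
        exact Gamma_div_add_one_le_factorial_rpow hβ n
    _ = t⁻¹ / β * ((|z| * t ^ (-1 / β)) ^ n / (n.factorial : ℝ) ^ (1 - 1 / β)) := by
        rw [ht_pow, rpow_sub hfact, rpow_one]
        field_simp
        ring

theorem hasSum_integral_weibullWeight_mul_sin_mul_cosh (hβ : 1 < β) (ht : 0 < t) (x φ : ℝ) :
    HasSum (fun k : ℕ => (-1) ^ k * x ^ (2 * k + 1) * cos ((2 * k + 1) * φ) /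
        (2 * k + 1).factorial *
        (t ^ (-(1 + ((2 * k + 1 : ℕ) : ℝ) / β)) / β * Gamma (((2 * k + 1 : ℕ) : ℝ) / β + 1)))
      (∫ y in Ioi 0, exp (-t * y ^ β) * y ^ (β - 1) * sin (x * y * cos φ) *
        cosh (x * y * sin φ)) := by
  have hβ0 : 0 < β := by linarith
  set c : ℕ → ℝ := fun k =>
    (-1) ^ k * x ^ (2 * k + 1) * cos ((2 * k + 1) * φ) / (2 * k + 1).factorial
  set m : ℕ → ℝ → ℝ := fun n y => exp (-t * y ^ β) * y ^ (β - 1) * y ^ n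
  have hseries (y : ℝ) : HasSum (fun k => c k * m (2 * k + 1) y)
      (exp (-t * y ^ β) * y ^ (β - 1) * (sin (x * y * cos φ) * cosh (x * y * sin φ))) := by
    have hterm : (fun k : ℕ => exp (-t * y ^ β) * y ^ (β - 1) *
        ((-1) ^ k * (x * y) ^ (2 * k + 1) * cos ((2 * k + 1) * φ) / (2 * k + 1).factorial)) =
        fun k => c k * m (2 * k + 1) y := by
      funext k
      simp only [c, m, mul_pow]
      ring
    exact hterm ▸ (hasSum_sin_mul_cos_mul_cosh_mul_sin (x * y) φ).mul_left _
  have hnorm (k : ℕ) : ∫ y in Ioi 0, ‖c k * m (2 * k + 1) y‖ =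
      |c k| * ∫ y in Ioi 0, m (2 * k + 1) y := by
    rw [← integral_const_mul]
    refine setIntegral_congr_fun measurableSet_Ioi fun y (hy : 0 < y) => ?_
    rw [norm_mul, Real.norm_eq_abs, Real.norm_of_nonneg (by positivity)]
  have hc (k : ℕ) : |c k| ≤ |x| ^ (2 * k + 1) / (2 * k + 1).factorial := by
    simp only [c, abs_div, abs_mul, abs_pow, abs_neg, abs_one, one_pow, one_mul, Nat.abs_cast]
    gcongr
    exact mul_le_of_le_one_right (by positivity) (abs_cos_le_one _)
  have hsummable : Summable fun k => ∫ y in Ioi 0, ‖c k * m (2 * k + 1) y‖ := by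
    refine ((summable_pow_div_factorial_mul_weibullMoment hβ ht x).comp_injective
      (i := fun k => 2 * k + 1) (fun a b h => by simpa using h)).of_nonneg_of_le
      (fun k => integral_nonneg fun y => norm_nonneg _) (fun k => ?_)
    rw [hnorm, integral_weibullWeight_mul_pow hβ0 ht]
    exact mul_le_mul_of_nonneg_right (hc k) (by positivity)
  have hswap := hasSum_integral_of_summable_integral_norm
    (fun k => (integrableOn_weibullWeight_mul_pow hβ0 ht (2 * k + 1)).const_mul (c k)) hsummable
  have hintegral : (∫ y in Ioi 0, exp (-t * y ^ β) * y ^ (β - 1) * sin (x * y * cos φ) *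
      cosh (x * y * sin φ)) = ∫ y in Ioi 0, ∑' k, c k * m (2 * k + 1) y := by
    simp only [(hseries _).tsum_eq, mul_assoc]
  have hmoments : (fun k => ∫ y in Ioi 0, c k * m (2 * k + 1) y) = fun k =>
      c k * (t ^ (-(1 + ((2 * k + 1 : ℕ) : ℝ) / β)) / β * Gamma (((2 * k + 1 : ℕ) : ℝ) / β + 1)) :=
    funext fun k => by rw [integral_const_mul, integral_weibullWeight_mul_pow hβ0 ht]
  rw [hintegral, ← hmoments]
  exact hswap

theorem series_term_eq_mul_weibull_term {x : ℝ} (hβ : 0 < β) (ht : 0 < t) (hx : x ≠ 0) (k : ℕ)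
    (s : ℝ) :
    1 / (β * π * t ^ (1 / β)) * ((x / t ^ (1 / β)) ^ (2 * k) *
      (Gamma ((2 * k + 1) / β) / (2 * k).factorial) * ((-1) ^ k * s)) =
    β * t / (π * x) * ((-1) ^ k * x ^ (2 * k + 1) * s / (2 * k + 1).factorial *
      (t ^ (-(1 + ((2 * k + 1 : ℕ) : ℝ) / β)) / β * Gamma (((2 * k + 1 : ℕ) : ℝ) / β + 1))) := by
  have hGamma : Gamma (((2 * k + 1 : ℕ) : ℝ) / β + 1) =
      (2 * k + 1) / β * Gamma ((2 * k + 1) / β) := by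
    push_cast
    exact Gamma_add_one (by positivity)
  have hfact : ((2 * k + 1).factorial : ℝ) = (2 * k + 1) * (2 * k).factorial := by
    push_cast [Nat.factorial_succ]
    ring
  have ht_pow : t ^ (-(1 + ((2 * k + 1 : ℕ) : ℝ) / β)) =
      (t * t ^ (1 / β) * (t ^ (1 / β)) ^ (2 * k))⁻¹ := by
    rw [← rpow_natCast, ← rpow_mul ht.le, mul_assoc, ← rpow_add ht,
      ← rpow_one_add' ht.le (by positivity), ← rpow_neg ht.le]
    congr 1
    push_cast
    ring
  rw [hGamma, hfact, ht_pow, div_pow, pow_succ]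
  field_simp

end WeibullMoments

theorem subordinatedFresnel_weibull_repr_general (α θ t x : ℝ) (hαθ : 1 < α * θ) (ht : 0 < t)
    (hx : x ≠ 0) :
    (1 / (α * θ * π * t ^ (1 / (α * θ)))) *
        ∑' k : ℕ, (x / t ^ (1 / (α * θ))) ^ (2 * k) *
          (Real.Gamma ((2 * k + 1) / (α * θ)) / (2 * k).factorial) *
          Real.sin (π * (2 * k + 1) * (α + 1) / (2 * α)) =
      (α * θ * t / (π * x)) *
        ∫ y in Ioi (0 : ℝ), Real.exp (-t * y ^ (α * θ)) * y ^ (α * θ - 1) *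
          Real.sin (x * y * Real.cos (π / (2 * α))) *
          Real.cosh (x * y * Real.sin (π / (2 * α))) := by
  have hα : α ≠ 0 := left_ne_zero_of_mul (by linarith : α * θ ≠ 0)
  rw [← (hasSum_integral_weibullWeight_mul_sin_mul_cosh hαθ ht x (π / (2 * α))).tsum_eq,
    ← tsum_mul_left, ← tsum_mul_left]
  congr 1
  funext k
  rw [sin_pi_mul_odd_mul_add_one_div hα, series_term_eq_mul_weibull_term (by linarith) ht hx]

/-- For `α > 1`, `0 < θ < 1` with `αθ > 1`, `t > 0` and
`x ≠ 0`, the density of the subordinated Fresnel pseudoprocess admits the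
Weibull probabilistic representation
`(1/(αθπ t^{1/(αθ)})) ∑_{k=0}^∞ (x/t^{1/(αθ)})^{2k} (Γ((2k+1)/(αθ))/(2k)!)
   sin(π(2k+1)(α+1)/(2α))
 = (αθt/(πx)) ∫_0^∞ e^{-t y^{αθ}} y^{αθ−1} sin(x y cos(π/(2α)))
   cosh(x y sin(π/(2α))) dy`. -/
theorem subordinatedFresnel_weibull_repr (α θ t x : ℝ) (hα : 1 < α)
    (hθ0 : 0 < θ) (hθ1 : θ < 1) (hαθ : 1 < α * θ) (ht : 0 < t) (hx : x ≠ 0) :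
    (1 / (α * θ * π * t ^ (1 / (α * θ)))) *
        ∑' k : ℕ, (x / t ^ (1 / (α * θ))) ^ (2 * k) *
          (Real.Gamma ((2 * k + 1) / (α * θ)) / (2 * k).factorial) *
          Real.sin (π * (2 * k + 1) * (α + 1) / (2 * α)) =
      (α * θ * t / (π * x)) *
        ∫ y in Ioi (0 : ℝ), Real.exp (-t * y ^ (α * θ)) * y ^ (α * θ - 1) *
          Real.sin (x * y * Real.cos (π / (2 * α))) *
          Real.cosh (x * y * Real.sin (π / (2 * α))) :=
  subordinatedFresnel_weibull_repr_general α θ t x hαθ ht hx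
end
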